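/- arXiv:2108.09590 — 2 statements merged into one kernel-verified Lean document; each statement's English description precedes it below -/
import Mathlib

section
/- Fix an integer d ≥ 1 and an integer k ≥ 2. For sequences α(N) > 0 and μ_1(N), ..., μ_k(N) > 0 indexed by N ∈ ℕ, one has μ_k·α^d·β_k^{d+1} → 0 as N → ∞ if and only if μ_k·α^d·β_{k-1}^{d+1} → 0 as N → ∞, where β_j := (N·α^{(j-1)d}·∏_{i=1}^{j} μ_i)^{-1/((j-1)d+j)}. (Lemma 3.2 of the paper.) -/
open Filter

/-- `beta d α μ j N` is the quantity
`β_j = (N · α^{(j-1)d} · ∏_{i=1}^{j} μ_i)^{-1/((j-1)d+j)}` from the paper,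
where all quantities depend on `N` and the power is a real power. -/
noncomputable def beta (d : ℕ) (α : ℕ → ℝ) (μ : ℕ → ℕ → ℝ) (j N : ℕ) : ℝ :=
  ((N : ℝ) * α N ^ ((j - 1) * d) * ∏ i ∈ Finset.Icc 1 j, μ i N) ^
    (-(1 / (((j - 1) * d + j : ℕ) : ℝ)))

/-!
With `a = μ_k α^d` and `m = (k-2)d + (k-1)`, the defining base of `β_k` is that of `β_{k-1}`
times `a`, and its exponent is `m + d + 1` instead of `m`. Hence
`a β_k^{d+1} = (a β_{k-1}^{d+1})^{m/(m+d+1)}`: each sequence is a fixed positive real power of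
the other, and `t ↦ t^θ` (`θ > 0`) is a homeomorphism of `[0, ∞)` fixing `0`.
-/

open Topology

theorem tendsto_rpow_nhds_zero_iff {ι : Type*} {l : Filter ι} {g : ι → ℝ} {θ : ℝ}
    (hθ : 0 < θ) (hg : ∀ x, 0 ≤ g x) :
    Tendsto (fun x => g x ^ θ) l (𝓝 0) ↔ Tendsto g l (𝓝 0) := by
  refine ⟨fun h => ?_, fun h => ?_⟩
  · simpa [Real.rpow_rpow_inv (hg _) hθ.ne', Real.zero_rpow (inv_ne_zero hθ.ne')] using
      h.rpow_const (p := θ⁻¹) (Or.inr (inv_nonneg.2 hθ.le))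
  · simpa [Real.zero_rpow hθ.ne'] using h.rpow_const (p := θ) (Or.inr hθ.le)

/-- Both sides equal `a ^ (m / (m + e)) * P ^ (-e / (m + e))`. -/
theorem mul_rpow_neg_inv_pow_eq_rpow {a P : ℝ} (ha : 0 < a) (hP : 0 ≤ P) {m e : ℕ}
    (hm : 0 < m) :
    a * ((P * a) ^ (-(1 / ((m + e : ℕ) : ℝ)))) ^ e =
      (a * (P ^ (-(1 / (m : ℝ)))) ^ e) ^ ((m : ℝ) / (m + e : ℕ)) := by
  have hm' : (0 : ℝ) < m := by exact_mod_cast hm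
  have hexp : 1 + -(1 / ((m + e : ℕ) : ℝ)) * e = m / (m + e : ℕ) := by
    push_cast
    field_simp
    ring
  rw [← Real.rpow_natCast _ e, ← Real.rpow_natCast _ e, ← Real.rpow_mul (by positivity),
    ← Real.rpow_mul hP, Real.mul_rpow hP ha.le, Real.mul_rpow ha.le (Real.rpow_nonneg hP _),
    ← Real.rpow_mul hP, mul_left_comm, ← Real.rpow_one_add' ha.le (by rw [hexp]; positivity),
    hexp, mul_comm]
  congr 2
  push_cast
  field_simp

noncomputable def betaBase (d : ℕ) (α : ℕ → ℝ) (μ : ℕ → ℕ → ℝ) (j N : ℕ) : ℝ :=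
  (N : ℝ) * α N ^ ((j - 1) * d) * ∏ i ∈ Finset.Icc 1 j, μ i N

section beta

variable {d : ℕ} {α : ℕ → ℝ} {μ : ℕ → ℕ → ℝ} {j N : ℕ}

theorem beta_eq_betaBase_rpow :
    beta d α μ j N = betaBase d α μ j N ^ (-(1 / (((j - 1) * d + j : ℕ) : ℝ))) :=
  rfl

theorem betaBase_nonneg (hα : 0 ≤ α N) (hμ : ∀ i, 1 ≤ i → i ≤ j → 0 ≤ μ i N) :
    0 ≤ betaBase d α μ j N :=
  mul_nonneg (by positivity) <| Finset.prod_nonneg fun i hi =>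
    hμ i (Finset.mem_Icc.1 hi).1 (Finset.mem_Icc.1 hi).2

theorem beta_nonneg (hα : 0 ≤ α N) (hμ : ∀ i, 1 ≤ i → i ≤ j → 0 ≤ μ i N) :
    0 ≤ beta d α μ j N :=
  Real.rpow_nonneg (betaBase_nonneg hα hμ) _

theorem betaBase_succ (hj : 1 ≤ j) :
    betaBase d α μ (j + 1) N = betaBase d α μ j N * (μ (j + 1) N * α N ^ d) := by
  obtain ⟨j, rfl⟩ : ∃ i, j = i + 1 := ⟨j - 1, by omega⟩
  simp only [betaBase, Finset.prod_Icc_succ_top (by omega : 1 ≤ j + 2), Nat.add_sub_cancel]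
  ring

theorem mul_pow_beta_succ_eq_rpow (hj : 1 ≤ j) (hα : 0 < α N)
    (hμ : ∀ i, 1 ≤ i → i ≤ j + 1 → 0 < μ i N) :
    μ (j + 1) N * α N ^ d * beta d α μ (j + 1) N ^ (d + 1) =
      (μ (j + 1) N * α N ^ d * beta d α μ j N ^ (d + 1)) ^
        ((((j - 1) * d + j : ℕ) : ℝ) / ((j * d + (j + 1) : ℕ) : ℝ)) := by
  have hdeg : j * d + (j + 1) = ((j - 1) * d + j) + (d + 1) := by
    obtain ⟨i, rfl⟩ : ∃ i, j = i + 1 := ⟨j - 1, by omega⟩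
    simp only [Nat.add_sub_cancel]
    ring
  have hB : 0 ≤ betaBase d α μ j N :=
    betaBase_nonneg hα.le fun i hi hij => (hμ i hi (by omega)).le
  rw [beta_eq_betaBase_rpow, beta_eq_betaBase_rpow, betaBase_succ hj, Nat.add_sub_cancel,
    hdeg]
  exact mul_rpow_neg_inv_pow_eq_rpow (mul_pos (hμ _ (by omega) le_rfl) (pow_pos hα d)) hB
    (Nat.add_pos_right _ hj)

end beta

theorem stmt0_general (d k : ℕ) (hk : 2 ≤ k)
    (α : ℕ → ℝ) (μ : ℕ → ℕ → ℝ)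
    (hα : ∀ N, 0 < α N) (hμ : ∀ i, 1 ≤ i → i ≤ k → ∀ N, 0 < μ i N) :
    Tendsto (fun N => μ k N * α N ^ d * beta d α μ k N ^ (d + 1)) atTop (nhds 0) ↔
      Tendsto (fun N => μ k N * α N ^ d * beta d α μ (k - 1) N ^ (d + 1)) atTop (nhds 0) := by
  obtain ⟨j, rfl⟩ : ∃ j, k = j + 1 := ⟨k - 1, by omega⟩
  have hj : 1 ≤ j := by omega
  have hθ : (0 : ℝ) < (((j - 1) * d + j : ℕ) : ℝ) / ((j * d + (j + 1) : ℕ) : ℝ) := by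
    have : 0 < (j - 1) * d + j := Nat.add_pos_right _ hj
    positivity
  simp only [Nat.add_sub_cancel]
  rw [show (fun N => μ (j + 1) N * α N ^ d * beta d α μ (j + 1) N ^ (d + 1)) = _ from
    funext fun N => mul_pow_beta_succ_eq_rpow hj (hα N) fun i hi hij => hμ i hi hij N]
  refine tendsto_rpow_nhds_zero_iff hθ fun N => ?_
  have hβ : 0 ≤ beta d α μ j N :=
    beta_nonneg (hα N).le fun i hi hij => (hμ i hi (by omega) N).le
  have hμk := hμ (j + 1) (by omega) le_rfl N
  have hαN := hα N
  positivity

/-- Lemma 3.2: for `k ≥ 2`, `μ_k·α^d·β_k^{d+1} → 0` iff `μ_k·α^d·β_{k-1}^{d+1} → 0`. -/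
theorem stmt0 (d k : ℕ) (hd : 1 ≤ d) (hk : 2 ≤ k)
    (α : ℕ → ℝ) (μ : ℕ → ℕ → ℝ)
    (hα : ∀ N, 0 < α N) (hμ : ∀ i, 1 ≤ i → i ≤ k → ∀ N, 0 < μ i N) :
    Tendsto (fun N => μ k N * α N ^ d * beta d α μ k N ^ (d + 1)) atTop (nhds 0) ↔
      Tendsto (fun N => μ k N * α N ^ d * beta d α μ (k - 1) N ^ (d + 1)) atTop (nhds 0) :=
  stmt0_general d k hk α μ hα hμ
end

section
/- Suppose that for every positive integer N, (Y_N(t), t ≥ 0) is a nonnegative stochastic process on a probability space (Ω_N, P_N) such that t ↦ Y_N(ω, t) is nondecreasing for every ω, ω ↦ Y_N(ω, t) is measurable, and E[Y_N(t)] < ∞ for each t > 0. Assume there exist sequences of positive real numbers (ν_N) and (s_N) and a continuous nondecreasing function g : (0,∞) → (0,∞) such that for each fixed t > 0 and ε > 0: (i) P_N(|Y_N(s_N t) − E[Y_N(s_N t)]| > ε·E[Y_N(s_N t)]) → 0 as N → ∞, and (ii) E[Y_N(s_N t)]/ν_N → g(t) as N → ∞. Then for all ε > 0 and δ ∈ (0,1),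 P_N( ν_N·g(t)·(1−ε) ≤ Y_N(s_N t) ≤ ν_N·g(t)·(1+ε) for all t ∈ [δ, δ^{-1}] ) → 1 as N → ∞. (Lemma 3.3 of the paper, quoted from Lemma 9 of Foo–Leder–Schweinsberg.) -/
/-!
Cut `[δ, δ⁻¹]` into a finite grid so fine that `g` moves by less than `θ g(δ) ≤ θ g(t)` between
neighbouring points. By the union bound, with probability tending to one every grid value
`Y_N(s_N u)` is within relative error `θ` of its mean, and for large `N` every mean is within
relative error `2θ` of `ν_N g(t)` for `t` next to `u`. Since `Y_N` is nondecreasing, `Y_N(s_N t)`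
lies between its values at the grid points bracketing `t`, hence within relative error
`(1 + 2θ)(1 + θ) - 1 ≤ 4θ` of `ν_N g(t)`.
-/

open Filter MeasureTheory Topology

def InBand (c ε y : ℝ) : Prop :=
  c * (1 - ε) ≤ y ∧ y ≤ c * (1 + ε)

namespace InBand

variable {c ε y : ℝ}

theorem iff_abs_sub_le : InBand c ε y ↔ |y - c| ≤ ε * c := by
  rw [abs_sub_le_iff, InBand]
  constructor <;> rintro ⟨h₁, h₂⟩ <;> constructor <;> linarith

theorem of_dist_lt {x η θ : ℝ} (hy : dist y x < η) (hc : dist c x < η) (hη : η ≤ θ * c) :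
    InBand c (2 * θ) y := by
  rw [iff_abs_sub_le, ← Real.dist_eq]
  linarith [dist_triangle_right y c x]

theorem mul_left (h : InBand c ε y) {a : ℝ} (ha : 0 ≤ a) : InBand (a * c) ε (a * y) := by
  constructor <;> nlinarith [h.1, h.2]

theorem mono (h : InBand c ε y) {ε' : ℝ} (hε : ε ≤ ε') (hc : 0 ≤ c) : InBand c ε' y := by
  constructor <;> nlinarith [h.1, h.2]

theorem trans {m α β : ℝ} (hm : InBand c α m) (hy : InBand m β y) (hc : 0 ≤ c) (hα : 0 ≤ α)
    (hβ₀ : 0 ≤ β) (hβ₁ : β ≤ 1) : InBand c (α + β + α * β) y := by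
  obtain ⟨hm₁, hm₂⟩ := hm
  obtain ⟨hy₁, hy₂⟩ := hy
  constructor
  · nlinarith [mul_le_mul_of_nonneg_right hm₁ (sub_nonneg.2 hβ₁), mul_nonneg hc (mul_nonneg hα hβ₀)]
  · nlinarith [mul_le_mul_of_nonneg_right hm₂ (by linarith : (0 : ℝ) ≤ 1 + β)]

theorem of_near_mean {x m ν η θ : ℝ} (hν : 0 < ν) (hc : 0 ≤ c) (hθ₀ : 0 ≤ θ) (hθ₁ : θ ≤ 1 / 2)
    (hm : dist (m / ν) x < η) (hcx : dist c x < η) (hη : η ≤ θ * c) (hy : |y - m| ≤ θ * m) :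
    InBand (ν * c) (4 * θ) y := by
  have hmean : InBand (ν * c) (2 * θ) m := by
    simpa only [mul_div_cancel₀ _ hν.ne'] using (of_dist_lt hm hcx hη).mul_left hν.le
  refine (hmean.trans (iff_abs_sub_le.2 hy) (by positivity) (by positivity) hθ₀ (by linarith)).mono
    ?_ (by positivity)
  nlinarith

theorem of_le_of_le {yu yv : ℝ} (hu : InBand c ε yu) (hv : InBand c ε yv) (hut : yu ≤ y)
    (htv : y ≤ yv) : InBand c ε y :=
  ⟨hu.1.trans hut, htv.trans hv.2⟩

end InBand

theorem exists_finset_bracketing {a b ρ : ℝ} (hab : a ≤ b) (hρ : 0 < ρ) :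
    ∃ G : Finset ℝ, (∀ u ∈ G, u ∈ Set.Icc a b) ∧
      ∀ t ∈ Set.Icc a b, ∃ u ∈ G, ∃ v ∈ G, u ≤ t ∧ t ≤ v ∧ v - u < ρ := by
  set w := ρ / 2
  have hw : 0 < w := half_pos hρ
  have hwρ : w < ρ := half_lt_self hρ
  set τ : ℕ → ℝ := fun i => min (a + i * w) b
  refine ⟨(Finset.range (⌈(b - a) / w⌉₊ + 2)).image τ, ?_, ?_⟩
  · simp only [Finset.mem_image]
    rintro _ ⟨i, -, rfl⟩
    exact ⟨le_min (by nlinarith [Nat.cast_nonneg (α := ℝ) i]) hab, min_le_right _ _⟩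
  · rintro t ⟨hat, htb⟩
    set j := ⌊(t - a) / w⌋₊
    have hj : j ≤ ⌈(b - a) / w⌉₊ :=
      (Nat.floor_le_floor (by gcongr)).trans (Nat.floor_le_ceil _)
    have hjt : j * w ≤ t - a :=
      (le_div_iff₀ hw).1 (Nat.floor_le (div_nonneg (sub_nonneg.2 hat) hw.le))
    have htj : t - a < (j + 1) * w := (div_lt_iff₀ hw).1 (Nat.lt_floor_add_one _)
    have hτj : τ j = a + j * w := min_eq_left (by linarith)
    have hτj₁ : τ (j + 1) ≤ a + (j + 1) * w := by
      simpa only [τ, Nat.cast_succ] using min_le_left (a + ((j + 1 : ℕ) : ℝ) * w) b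
    refine ⟨τ j, Finset.mem_image_of_mem _ (Finset.mem_range.2 (by omega)),
      τ (j + 1), Finset.mem_image_of_mem _ (Finset.mem_range.2 (by omega)), ?_, ?_, ?_⟩
    · rw [hτj]; linarith
    · exact le_min (by push_cast; linarith) htb
    · rw [hτj]; linarith

theorem tendsto_measure_one_of_compl_subset_biUnion {α ι : Type*} {Ω : α → Type*}
    [∀ a, MeasurableSpace (Ω a)] {P : ∀ a, Measure (Ω a)} [∀ a, IsProbabilityMeasure (P a)]
    {l : Filter α} {A : ∀ a, Set (Ω a)} (I : Finset ι) {B : ι → ∀ a, Set (Ω a)}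
    (hB : ∀ i ∈ I, Tendsto (fun a => P a (B i a)) l (𝓝 0))
    (hA : ∀ᶠ a in l, (A a)ᶜ ⊆ ⋃ i ∈ I, B i a) :
    Tendsto (fun a => P a (A a)) l (𝓝 1) := by
  have hsum : Tendsto (fun a => ∑ i ∈ I, P a (B i a)) l (𝓝 0) := by
    simpa using tendsto_finsetSum I hB
  have hlow : ∀ᶠ a in l, 1 - ∑ i ∈ I, P a (B i a) ≤ P a (A a) := by
    filter_upwards [hA] with a ha
    rw [tsub_le_iff_right]
    calc 1 = P a (A a ∪ (A a)ᶜ) := by rw [Set.union_compl_self, measure_univ]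
      _ ≤ P a (A a) + P a (A a)ᶜ := measure_union_le _ _
      _ ≤ P a (A a) + ∑ i ∈ I, P a (B i a) :=
        add_le_add_right ((measure_mono ha).trans (measure_biUnion_finset_le _ _)) _
  have hlim : Tendsto (fun a => 1 - ∑ i ∈ I, P a (B i a)) l (𝓝 1) := by
    simpa using ENNReal.Tendsto.sub tendsto_const_nhds hsum (Or.inl ENNReal.one_ne_top)
  exact tendsto_of_tendsto_of_tendsto_of_le_of_le' hlim tendsto_const_nhds hlow
    (Eventually.of_forall fun _ => prob_le_one)

theorem stmt2_general (Ω : ℕ → Type*) [∀ N, MeasurableSpace (Ω N)]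
    (P : ∀ N, Measure (Ω N)) [∀ N, IsProbabilityMeasure (P N)]
    (Y : ∀ N, Ω N → ℝ → ℝ)
    (hY_mono : ∀ N ω, MonotoneOn (Y N ω) (Set.Ici (0 : ℝ)))
    (ν s : ℕ → ℝ) (hν : ∀ N, 0 < ν N) (hs : ∀ N, 0 < s N)
    (g : ℝ → ℝ) (hg_cont : ContinuousOn g (Set.Ioi (0 : ℝ)))
    (hg_mono : MonotoneOn g (Set.Ioi (0 : ℝ))) (hg_pos : ∀ t, 0 < t → 0 < g t)
    (hconc : ∀ t : ℝ, 0 < t → ∀ ε : ℝ, 0 < ε →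
      Tendsto (fun N => (P N) {ω | |Y N ω (s N * t) - ∫ ω', Y N ω' (s N * t) ∂(P N)| >
        ε * ∫ ω', Y N ω' (s N * t) ∂(P N)}) atTop (nhds 0))
    (hmean : ∀ t : ℝ, 0 < t →
      Tendsto (fun N => (∫ ω', Y N ω' (s N * t) ∂(P N)) / ν N) atTop (nhds (g t))) :
    ∀ ε : ℝ, 0 < ε → ∀ δ : ℝ, 0 < δ → δ < 1 →
      Tendsto (fun N => (P N) {ω | ∀ t ∈ Set.Icc δ δ⁻¹,
          ν N * g t * (1 - ε) ≤ Y N ω (s N * t) ∧ Y N ω (s N * t) ≤ ν N * g t * (1 + ε)})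
        atTop (nhds 1) := by
  intro ε hε δ hδ hδ1
  set θ := min (ε / 4) (1 / 2)
  have hθ : 0 < θ := lt_min (by linarith) one_half_pos
  have hθ₁ : θ ≤ 1 / 2 := min_le_right _ _
  have hθε : 4 * θ ≤ ε := by linarith [min_le_left (ε / 4) (1 / 2)]
  have hpos : ∀ t ∈ Set.Icc δ δ⁻¹, 0 < t := fun t ht => hδ.trans_le ht.1
  have hpath : ∀ N ω, MonotoneOn (fun t => Y N ω (s N * t)) (Set.Ioi 0) := fun N ω =>
    (hY_mono N ω).comp ((monotone_mul_left_of_nonneg (hs N).le).monotoneOn _)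
      fun t ht => (mul_pos (hs N) ht).le
  obtain ⟨ρ, hρ, hg_near⟩ := Metric.uniformContinuousOn_iff.1
    (isCompact_Icc.uniformContinuousOn_of_continuous (hg_cont.mono hpos))
    (θ * g δ) (mul_pos hθ (hg_pos δ hδ))
  obtain ⟨G, hG, hbracket⟩ := exists_finset_bracketing
    (hδ1.le.trans (one_le_inv₀ hδ |>.2 hδ1.le)) hρ
  refine tendsto_measure_one_of_compl_subset_biUnion G
    (fun u hu => hconc u (hpos u (hG u hu)) θ hθ) ?_
  have hmean_G : ∀ᶠ N in atTop, ∀ u ∈ G,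
      dist ((∫ ω', Y N ω' (s N * u) ∂(P N)) / ν N) (g u) < θ * g δ :=
    (eventually_all_finset G).2 fun u hu =>
      Metric.tendsto_nhds.1 (hmean u (hpos u (hG u hu))) _ (mul_pos hθ (hg_pos δ hδ))
  filter_upwards [hmean_G] with N hN
  rw [Set.compl_subset_comm]
  intro ω hω t ht
  simp only [Set.mem_compl_iff, Set.mem_iUnion, not_exists, Set.mem_ofPred_eq, not_lt] at hω
  have hgt : 0 < g t := hg_pos t (hpos t ht)
  have hband : ∀ u ∈ G, dist t u < ρ → InBand (ν N * g t) ε (Y N ω (s N * u)) := fun u hu htu =>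
    (InBand.of_near_mean (hν N) hgt.le hθ.le hθ₁ (hN u hu) (hg_near t ht u (hG u hu) htu)
      (mul_le_mul_of_nonneg_left (hg_mono hδ (hpos t ht) ht.1) hθ.le) (hω u hu)).mono hθε
      (mul_pos (hν N) hgt).le
  obtain ⟨u, hu, v, hv, hut, htv, huv⟩ := hbracket t ht
  exact InBand.of_le_of_le
    (hband u hu ((Real.dist_le_of_mem_Icc ⟨hut, htv⟩ ⟨le_rfl, hut.trans htv⟩).trans_lt huv))
    (hband v hv ((Real.dist_le_of_mem_Icc ⟨hut, htv⟩ ⟨hut.trans htv, le_rfl⟩).trans_lt huv))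
    (hpath N ω (hpos u (hG u hu)) (hpos t ht) hut) (hpath N ω (hpos t ht) (hpos v (hG v hv)) htv)

/-- Lemma 3.3 (Lemma 9 of Foo–Leder–Schweinsberg): a nondecreasing nonnegative stochastic
process whose expectation scales like `ν_N g(t)` on the time scale `s_N`, and which
concentrates around its expectation, is uniformly well-approximated by `ν_N g(t)` on
compact time intervals `[δ, δ⁻¹]`, with probability tending to one. -/
theorem stmt2 (Ω : ℕ → Type*) [∀ N, MeasurableSpace (Ω N)]
    (P : ∀ N, Measure (Ω N)) [∀ N, IsProbabilityMeasure (P N)]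
    (Y : ∀ N, Ω N → ℝ → ℝ)
    (hY_nonneg : ∀ N ω t, 0 ≤ t → 0 ≤ Y N ω t)
    (hY_mono : ∀ N ω, MonotoneOn (Y N ω) (Set.Ici (0 : ℝ)))
    (hY_meas : ∀ N t, Measurable (fun ω => Y N ω t))
    (hY_int : ∀ N t, 0 < t → Integrable (fun ω => Y N ω t) (P N))
    (ν s : ℕ → ℝ) (hν : ∀ N, 0 < ν N) (hs : ∀ N, 0 < s N)
    (g : ℝ → ℝ) (hg_cont : ContinuousOn g (Set.Ioi (0 : ℝ)))
    (hg_mono : MonotoneOn g (Set.Ioi (0 : ℝ))) (hg_pos : ∀ t, 0 < t → 0 < g t)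
    (hconc : ∀ t : ℝ, 0 < t → ∀ ε : ℝ, 0 < ε →
      Tendsto (fun N => (P N) {ω | |Y N ω (s N * t) - ∫ ω', Y N ω' (s N * t) ∂(P N)| >
        ε * ∫ ω', Y N ω' (s N * t) ∂(P N)}) atTop (nhds 0))
    (hmean : ∀ t : ℝ, 0 < t →
      Tendsto (fun N => (∫ ω', Y N ω' (s N * t) ∂(P N)) / ν N) atTop (nhds (g t))) :
    ∀ ε : ℝ, 0 < ε → ∀ δ : ℝ, 0 < δ → δ < 1 →
      Tendsto (fun N => (P N) {ω | ∀ t ∈ Set.Icc δ δ⁻¹,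
          ν N * g t * (1 - ε) ≤ Y N ω (s N * t) ∧ Y N ω (s N * t) ≤ ν N * g t * (1 + ε)})
        atTop (nhds 1) :=
  stmt2_general Ω P Y hY_mono ν s hν hs g hg_cont hg_mono hg_pos hconc hmean
end
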